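/- Let (Y, ν, S) be a uniquely ergodic topological dynamical system on a compact metric space, K a compact metrizable abelian group, and ρ : Y → K continuous. If the skew product T(y,k) = (Sy, k + ρ(y)) on Y × K is ergodic with respect to ν × m_K, then (Y × K, T) is uniquely ergodic. -/

import Mathlib

/-!
Let `μ` be an invariant probability measure of the skew product `T`. Its projection to `Y` is
`S`-invariant, hence equal to `ν`. Fix a continuous `g`, let `c = ∫ g d(ν × m_K)` and
`h k = ∫ g(y, x + k) dμ(y, x)`. Since `T` commutes with the translations of the fibre `K` and `μ`
is invariant, `g` may be replaced by its Birkhoff averages `Aₙ g` in the definition of `h`; and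
averaging the translates of `μ` over `m_K` gives `ν × m_K`. Hence
`∫ |h - c| dm_K ≤ ∫ |Aₙ g - c| d(ν × m_K)`, which tends to `0` by the mean ergodic theorem for
the ergodic measure `ν × m_K`. So `h = c` almost everywhere, hence everywhere since `h` is
continuous and `m_K` charges every open set, and `∫ g dμ = h 0 = c`.
-/

open MeasureTheory

def UniquelyErgodic {Y : Type*} [MeasurableSpace Y] (S : Y → Y) : Prop :=
  ∃! μ : Measure Y, IsProbabilityMeasure μ ∧ Measure.map S μ = μ

open Filter Topology Function

lemma Function.Commute.birkhoffAverage_comp {α M : Type*} [AddCommMonoid M] [Module ℝ M]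
    {f e : α → α} (h : Function.Commute f e) (g : α → M) (n : ℕ) :
    birkhoffAverage ℝ f (g ∘ e) n = birkhoffAverage ℝ f g n ∘ e := by
  funext x
  simp [birkhoffAverage, birkhoffSum, (h.iterate_left _).eq]

lemma continuous_birkhoffAverage {α M : Type*} [TopologicalSpace α] [AddCommMonoid M]
    [TopologicalSpace M] [ContinuousAdd M] [Module ℝ M] [ContinuousConstSMul ℝ M] {T : α → α}
    (hT : Continuous T) {g : α → M} (hg : Continuous g) (n : ℕ) :
    Continuous (birkhoffAverage ℝ T g n) :=
  (continuous_finsetSum _ fun k _ ↦ hg.comp (hT.iterate k)).const_smul _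

lemma MeasureTheory.MeasurePreserving.integral_birkhoffAverage {α E : Type*} [MeasurableSpace α]
    [NormedAddCommGroup E] [NormedSpace ℝ E] {μ : Measure α} {T : α → α}
    (hT : MeasurePreserving T μ μ) {g : α → E} (hg : Integrable g μ) {n : ℕ} (hn : n ≠ 0) :
    ∫ x, birkhoffAverage ℝ T g n x ∂μ = ∫ x, g x ∂μ := by
  have h_iter (k : ℕ) : ∫ x, g (T^[k] x) ∂μ = ∫ x, g x ∂μ := by
    have hTk := hT.iterate k
    have hg' : AEStronglyMeasurable g (μ.map T^[k]) := by
      rw [hTk.map_eq]; exact hg.aestronglyMeasurable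
    rw [← integral_map hTk.measurable.aemeasurable hg', hTk.map_eq]
  simp only [birkhoffAverage, birkhoffSum]
  rw [integral_smul, integral_finsetSum (f := fun k x ↦ g (T^[k] x)) _
    fun k _ ↦ (hT.iterate k).integrable_comp_of_integrable hg,
    Finset.sum_congr rfl fun k _ ↦ h_iter k, Finset.sum_const, Finset.card_range,
    ← Nat.cast_smul_eq_nsmul ℝ, smul_smul, inv_mul_cancel₀ (Nat.cast_ne_zero.2 hn), one_smul]

section Koopman

variable {α : Type*} [MeasurableSpace α] {μ : Measure α} {T : α → α}

noncomputable def koopman (hT : MeasurePreserving T μ μ) : Lp ℝ 2 μ →L[ℝ] Lp ℝ 2 μ :=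
  (Lp.compMeasurePreservingₗᵢ ℝ T hT).toContinuousLinearMap

lemma coe_koopman (hT : MeasurePreserving T μ μ) :
    ⇑(koopman hT) = Lp.compMeasurePreserving T hT := rfl

lemma norm_koopman_le (hT : MeasurePreserving T μ μ) : ‖koopman hT‖ ≤ 1 :=
  LinearIsometry.norm_toContinuousLinearMap_le _

lemma coeFn_koopman_iterate_toLp (hT : MeasurePreserving T μ μ) {f : α → ℝ}
    (hf : MemLp f 2 μ) (n : ℕ) : ⇑((koopman hT)^[n] (hf.toLp f)) =ᵐ[μ] f ∘ T^[n] := by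
  rw [coe_koopman, Lp.compMeasurePreserving_iterate, Lp.toLp_compMeasurePreserving]
  exact MemLp.coeFn_toLp _

lemma coeFn_birkhoffAverage_koopman (hT : MeasurePreserving T μ μ) {f : α → ℝ}
    (hf : MemLp f 2 μ) (n : ℕ) :
    ⇑(birkhoffAverage ℝ (koopman hT) id n (hf.toLp f)) =ᵐ[μ] birkhoffAverage ℝ T f n := by
  have h_sum : ⇑(birkhoffSum (koopman hT) id n (hf.toLp f)) =ᵐ[μ] birkhoffSum T f n := by
    induction n with
    | zero => simpa using Lp.coeFn_zero ℝ 2 μ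
    | succ n ih =>
      filter_upwards [Lp.coeFn_add (birkhoffSum (koopman hT) id n (hf.toLp f)) _, ih,
        coeFn_koopman_iterate_toLp hT hf n] with x h_add h_sum h_iter
      rw [funext (birkhoffSum_succ _ _ n), h_add, Pi.add_apply, h_sum, id, h_iter,
        birkhoffSum_succ, comp_apply]
  filter_upwards [Lp.coeFn_smul ((n : ℝ)⁻¹) (birkhoffSum (koopman hT) id n (hf.toLp f)), h_sum]
    with x h_smul h_sum
  rw [birkhoffAverage, h_smul, Pi.smul_apply, h_sum, birkhoffAverage]

variable [IsProbabilityMeasure μ]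

lemma koopman_const (hT : MeasurePreserving T μ μ) (c : ℝ) :
    koopman hT (Lp.const 2 μ c) = Lp.const 2 μ c := by
  rw [← MemLp.toLp_const, coe_koopman, Lp.toLp_compMeasurePreserving]
  rfl

lemma Ergodic.eq_const_of_koopman_eq (hT : Ergodic T μ) {G : Lp ℝ 2 μ}
    (hG : koopman hT.toMeasurePreserving G = G) : G = Lp.const 2 μ (∫ x, G x ∂μ) := by
  have h_inv : ⇑G ∘ T =ᵐ[μ] G := by
    have h_comp := Lp.coeFn_compMeasurePreserving G hT.toMeasurePreserving
    rw [← coe_koopman, hG] at h_comp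
    exact h_comp.symm
  obtain ⟨c, hc⟩ := hT.ae_eq_const_of_ae_eq_comp_ae (Lp.aestronglyMeasurable G) h_inv
  have h_int : ∫ x, G x ∂μ = c := by simp [integral_congr_ae hc]
  rw [h_int]
  exact Lp.ext (hc.trans (Lp.coeFn_const 2 μ c).symm)

lemma L2.inner_const_one (G : Lp ℝ 2 μ) :
    inner ℝ (Lp.const 2 μ (1 : ℝ)) G = ∫ x, G x ∂μ := by
  rw [← indicatorConstLp_univ, L2.inner_indicatorConstLp_one, Measure.restrict_univ]

lemma L2.integral_abs_le_norm (G : Lp ℝ 2 μ) : ∫ x, |G x| ∂μ ≤ ‖G‖ := by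
  have h_meas := Lp.aestronglyMeasurable G
  simp_rw [← Real.norm_eq_abs]
  rw [integral_norm_eq_lintegral_enorm h_meas, ← eLpNorm_one_eq_lintegral_enorm, Lp.norm_def]
  exact ENNReal.toReal_mono (Lp.eLpNorm_ne_top G)
    (eLpNorm_le_eLpNorm_of_exponent_le one_le_two h_meas)

theorem Ergodic.tendsto_birkhoffAverage_koopman (hT : Ergodic T μ) (F : Lp ℝ 2 μ) :
    Tendsto (fun n ↦ birkhoffAverage ℝ (koopman hT.toMeasurePreserving) id n F) atTop
      (𝓝 (Lp.const 2 μ (∫ x, F x ∂μ))) := by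
  set U := koopman hT.toMeasurePreserving
  have h_lim := U.tendsto_birkhoffAverage_orthogonalProjection (norm_koopman_le _) F
  set P := (U.eqLocus (1 : Lp ℝ 2 μ →L[ℝ] Lp ℝ 2 μ)).orthogonalProjectionOnto F
  have hP_fixed : U P = P := P.2
  have h_one : Lp.const 2 μ (1 : ℝ) ∈ U.eqLocus (1 : Lp ℝ 2 μ →L[ℝ] Lp ℝ 2 μ) :=
    koopman_const _ 1
  have h_int : ∫ x, (P : Lp ℝ 2 μ) x ∂μ = ∫ x, F x ∂μ := by
    have h_orth := (Submodule.mem_orthogonal _ _).1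
      (Submodule.sub_starProjection_mem_orthogonal F) _ h_one
    rw [inner_sub_right, L2.inner_const_one, L2.inner_const_one,
      Submodule.starProjection_apply] at h_orth
    linarith
  rwa [hT.eq_const_of_koopman_eq hP_fixed, h_int] at h_lim

theorem Ergodic.tendsto_integral_abs_birkhoffAverage_sub (hT : Ergodic T μ) {f : α → ℝ}
    (hf : MemLp f 2 μ) :
    Tendsto (fun n ↦ ∫ x, |birkhoffAverage ℝ T f n x - ∫ y, f y ∂μ| ∂μ) atTop (𝓝 0) := by
  set U := koopman hT.toMeasurePreserving
  set F := hf.toLp f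
  have h_L2 := hT.tendsto_birkhoffAverage_koopman F
  rw [tendsto_iff_norm_sub_tendsto_zero] at h_L2
  refine squeeze_zero (fun n ↦ integral_nonneg fun _ ↦ abs_nonneg _) (fun n ↦ ?_) h_L2
  have h_ae : ⇑(birkhoffAverage ℝ U id n F - Lp.const 2 μ (∫ x, F x ∂μ))
      =ᵐ[μ] fun x ↦ birkhoffAverage ℝ T f n x - ∫ y, f y ∂μ := by
    filter_upwards [Lp.coeFn_sub (birkhoffAverage ℝ U id n F) _,
      coeFn_birkhoffAverage_koopman hT.toMeasurePreserving hf n,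
      Lp.coeFn_const 2 μ (∫ x, F x ∂μ)] with x h_sub h_avg h_const
    rw [h_sub, Pi.sub_apply, h_avg, h_const, const_apply, integral_congr_ae hf.coeFn_toLp]
  exact (integral_congr_ae (h_ae.fun_comp abs)).symm.trans_le (L2.integral_abs_le_norm _)

end Koopman

def skewProduct {Y K : Type*} [Add K] (S : Y → Y) (ρ : Y → K) (p : Y × K) : Y × K :=
  (S p.1, p.2 + ρ p.1)

lemma continuous_skewProduct {Y K : Type*} [TopologicalSpace Y] [TopologicalSpace K] [Add K]
    [ContinuousAdd K] {S : Y → Y} {ρ : Y → K} (hS : Continuous S) (hρ : Continuous ρ) :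
    Continuous (skewProduct S ρ) := by
  unfold skewProduct
  fun_prop

lemma skewProduct_commute_translate {Y K : Type*} [AddCommSemigroup K] (S : Y → Y) (ρ : Y → K)
    (k : K) : Function.Commute (skewProduct S ρ) (fun p ↦ (p.1, p.2 + k)) := fun p ↦ by
  simp [skewProduct, add_right_comm]

section Fibre

variable {Y K : Type*} [TopologicalSpace Y] [CompactSpace Y] [MeasurableSpace Y] [BorelSpace Y]
  [AddCommGroup K] [TopologicalSpace K] [IsTopologicalAddGroup K] [CompactSpace K]
  [MeasurableSpace K] [BorelSpace K] [SecondCountableTopology K]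

lemma continuous_integral_translate (μ : Measure (Y × K)) [IsFiniteMeasure μ] {F : Y × K → ℝ}
    (hF : Continuous F) : Continuous fun k ↦ ∫ p, F (p.1, p.2 + k) ∂μ := by
  simpa using continuous_parametric_integral_of_continuous (μ := μ)
    (f := fun k p ↦ F (p.1, p.2 + k)) (by fun_prop) isCompact_univ

variable (mK : Measure K) [mK.IsAddHaarMeasure]

lemma integral_integral_translate_eq_integral_map_fst_prod (μ : Measure (Y × K))
    [IsFiniteMeasure μ] {F : Y × K → ℝ} (hF : Continuous F) :
    ∫ k, ∫ p, F (p.1, p.2 + k) ∂μ ∂mK = ∫ p, F p ∂((μ.map Prod.fst).prod mK) := by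
  have h_int : Integrable (uncurry fun k (p : Y × K) ↦ F (p.1, p.2 + k)) (mK.prod μ) :=
    (hF.comp (by fun_prop)).integrable_of_hasCompactSupport (.of_compactSpace _)
  have h_fibre (p : Y × K) : ∫ k, F (p.1, p.2 + k) ∂mK = ∫ k, F (p.1, k) ∂mK :=
    integral_add_left_eq_self (fun k ↦ F (p.1, k)) p.2
  rw [integral_integral_swap h_int]
  simp only [h_fibre]
  rw [integral_prod _ (hF.integrable_of_hasCompactSupport (.of_compactSpace _)),
    integral_map measurable_fst.aemeasurable
      hF.stronglyMeasurable.integral_prod_right'.aestronglyMeasurable]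

theorem integral_eq_integral_prod_of_map_fst_eq {S : Y → Y} {ρ : Y → K} (hS : Continuous S)
    (hρ : Continuous ρ) {ν : Measure Y} [IsProbabilityMeasure ν] [IsProbabilityMeasure mK]
    (hT : Ergodic (skewProduct S ρ) (ν.prod mK)) {μ : Measure (Y × K)} [IsProbabilityMeasure μ]
    (hμT : MeasurePreserving (skewProduct S ρ) μ μ) (hμν : μ.map Prod.fst = ν)
    {g : Y × K → ℝ} (hg : Continuous g) :
    ∫ p, g p ∂μ = ∫ p, g p ∂(ν.prod mK) := by
  set T := skewProduct S ρ
  have hTc : Continuous T := continuous_skewProduct hS hρ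
  set c := ∫ p, g p ∂(ν.prod mK)
  set h : K → ℝ := fun k ↦ ∫ p, g (p.1, p.2 + k) ∂μ
  have h_cont : Continuous h := continuous_integral_translate μ hg
  have h_avg (n : ℕ) (hn : n ≠ 0) (k : K) :
      h k = ∫ p, birkhoffAverage ℝ T g n (p.1, p.2 + k) ∂μ := by
    have h_inv := hμT.integral_birkhoffAverage (g := g ∘ fun p ↦ (p.1, p.2 + k))
      ((hg.comp (by fun_prop)).integrable_of_hasCompactSupport (.of_compactSpace _)) hn
    rw [(skewProduct_commute_translate S ρ k).birkhoffAverage_comp] at h_inv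
    exact h_inv.symm
  have hA (n : ℕ) : Continuous fun p ↦ |birkhoffAverage ℝ T g n p - c| :=
    ((continuous_birkhoffAverage hTc hg n).sub continuous_const).abs
  have h_bound (n : ℕ) (hn : n ≠ 0) :
      ∫ k, |h k - c| ∂mK ≤ ∫ p, |birkhoffAverage ℝ T g n p - c| ∂(ν.prod mK) := by
    rw [← hμν, ← integral_integral_translate_eq_integral_map_fst_prod mK μ (hA n)]
    refine integral_mono
      ((h_cont.sub continuous_const).abs.integrable_of_hasCompactSupport (.of_compactSpace _))
      ((continuous_integral_translate μ (hA n)).integrable_of_hasCompactSupport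
        (.of_compactSpace _)) fun k ↦ ?_
    have h_int : Integrable (fun p ↦ birkhoffAverage ℝ T g n (p.1, p.2 + k)) μ :=
      ((continuous_birkhoffAverage hTc hg n).comp (by fun_prop)).integrable_of_hasCompactSupport
        (.of_compactSpace _)
    calc |h k - c| = |∫ p, (birkhoffAverage ℝ T g n (p.1, p.2 + k) - c) ∂μ| := by
          rw [integral_sub h_int (integrable_const c), integral_const, h_avg n hn k]
          simp
      _ ≤ _ := abs_integral_le_integral_abs
  have h_lim := hT.tendsto_integral_abs_birkhoffAverage_sub
    (hg.memLp_of_hasCompactSupport (.of_compactSpace _) (p := 2))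
  have h_zero : ∫ k, |h k - c| ∂mK = 0 :=
    le_antisymm (ge_of_tendsto h_lim (eventually_atTop.2 ⟨1, fun n hn ↦ h_bound n (by omega)⟩))
      (integral_nonneg fun _ ↦ abs_nonneg _)
  have h_ae : h =ᵐ[mK] fun _ ↦ c := by
    have h_abs := (integral_eq_zero_iff_of_nonneg (f := fun k ↦ |h k - c|)
      (fun _ ↦ abs_nonneg _)
      ((h_cont.sub continuous_const).abs.integrable_of_hasCompactSupport (.of_compactSpace _))).1
      h_zero
    filter_upwards [h_abs] with k hk
    exact sub_eq_zero.1 (abs_eq_zero.1 hk)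
  simpa [h] using congrFun ((h_cont.ae_eq_iff_eq mK continuous_const).1 h_ae) 0

end Fibre

/-- Furstenberg's criterion: an ergodic compact group extension of a uniquely
ergodic system is uniquely ergodic. -/
theorem ergodic_group_extension_uniquely_ergodic
    {Y : Type*} [MetricSpace Y] [CompactSpace Y] [MeasurableSpace Y] [BorelSpace Y]
    (S : Y → Y) (hS : Continuous S) (hue : UniquelyErgodic S)
    (ν : Measure Y) [IsProbabilityMeasure ν] (hν : Measure.map S ν = ν)
    (K : Type*) [AddCommGroup K] [TopologicalSpace K] [IsTopologicalAddGroup K]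
    [CompactSpace K] [TopologicalSpace.MetrizableSpace K] [MeasurableSpace K] [BorelSpace K]
    (mK : Measure K) [mK.IsAddHaarMeasure] [IsProbabilityMeasure mK]
    (ρ : Y → K) (hρ : Continuous ρ)
    (hT : Ergodic (fun p : Y × K => (S p.1, p.2 + ρ p.1)) (ν.prod mK)) :
    UniquelyErgodic (fun p : Y × K => (S p.1, p.2 + ρ p.1)) := by
  refine ⟨ν.prod mK, ⟨inferInstance, hT.map_eq⟩, fun μ ⟨_, hμT⟩ ↦ ?_⟩
  have hT_meas : Measurable (skewProduct S ρ) := (continuous_skewProduct hS hρ).measurable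
  have hμν : μ.map Prod.fst = ν := by
    refine hue.unique ⟨Measure.isProbabilityMeasure_map measurable_fst.aemeasurable, ?_⟩
      ⟨inferInstance, hν⟩
    rw [Measure.map_map hS.measurable measurable_fst,
      show S ∘ Prod.fst = Prod.fst ∘ skewProduct S ρ from rfl,
      ← Measure.map_map measurable_fst hT_meas]
    exact congrArg (Measure.map Prod.fst) hμT
  exact ext_of_forall_integral_eq_of_IsFiniteMeasure fun g ↦
    integral_eq_integral_prod_of_map_fst_eq mK hS hρ hT ⟨hT_meas, hμT⟩ hμν g.continuous
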